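/- arXiv:2001.03548 — 2 statements merged into one kernel-verified Lean document; each statement's English description precedes it below -/
import Mathlib

section
/- There exist constants c, C > 0 such that for every integer k ≥ 2, c k^{n-2} ≤ Σ_{j=2}^{k} [2(1 - cos(2π(j-1)/k))]^{-(n-2)/2} ≤ C k^{n-2} when n ≥ 4. -/
/-!
Since `2 (1 - cos 2x) = (2 sin x)²`, the `j`-th term is `(2 sin (π i / k))^{-(n-2)}` with
`i = j - 1 ∈ (0, k)`. The term `i = 1` alone gives the lower bound, because `sin x ≤ x`.
For the upper bound, Jordan's inequality `sin x ≥ (2/π) min (x, π - x)` bounds the `i`-th term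
by `(k / min (i, k - i))^{n-2} ≤ k^{n-2} (1/i² + 1/(k-i)²)`, and `∑ 1/i² ≤ 2`.
-/

open Finset Real

lemma sum_Icc_two_comp_sub_one (f : ℝ → ℝ) (k : ℕ) :
    ∑ j ∈ Icc 2 k, f ((j : ℝ) - 1) = ∑ i ∈ Ioo 0 k, f i := by
  symm
  refine sum_nbij' (· + 1) (· - 1) ?_ ?_ ?_ ?_ ?_ <;> intro i hi <;>
    simp only [mem_Icc, mem_Ioo] at hi ⊢
  all_goals first | omega | (push_cast; ring_nf)

lemma sum_Ioo_comp_sub (f : ℝ → ℝ) (k : ℕ) :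
    ∑ i ∈ Ioo 0 k, f ((k : ℝ) - i) = ∑ i ∈ Ioo 0 k, f i := by
  refine sum_nbij' (k - ·) (k - ·) ?_ ?_ ?_ ?_ ?_ <;> intro i hi <;> simp only [mem_Ioo] at hi ⊢
  all_goals first | omega | rw [Nat.cast_sub hi.2.le]

lemma two_mul_one_sub_cos_two_mul_rpow {x : ℝ} (hx : 0 ≤ sin x) (m : ℝ) :
    (2 * (1 - cos (2 * x))) ^ (-(m / 2)) = (2 * sin x) ^ (-m) := by
  have hsq : 2 * (1 - cos (2 * x)) = (2 * sin x) ^ (2 : ℝ) := by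
    rw [rpow_two, cos_two_mul, cos_sq']; ring
  rw [hsq, ← rpow_mul (by positivity)]
  ring_nf

lemma two_div_pi_mul_min_le_sin {x : ℝ} (h0 : 0 ≤ x) (hπ : x ≤ π) :
    2 / π * min x (π - x) ≤ sin x := by
  rcases le_total x (π / 2) with hx | hx
  · exact (mul_le_mul_of_nonneg_left (min_le_left _ _) (by positivity)).trans (mul_le_sin h0 hx)
  · rw [← sin_pi_sub]
    exact (mul_le_mul_of_nonneg_left (min_le_right _ _) (by positivity)).trans
      (mul_le_sin (by linarith) (by linarith))

lemma rpow_neg_le_inv_sq {s m : ℝ} (hs : 1 ≤ s) (hm : 2 ≤ m) : s ^ (-m) ≤ (s ^ 2)⁻¹ := by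
  rw [← rpow_two, ← rpow_neg (by positivity)]
  exact rpow_le_rpow_of_exponent_le hs (by linarith)

lemma inv_sq_min_le {a b : ℝ} : (min a b ^ 2)⁻¹ ≤ (a ^ 2)⁻¹ + (b ^ 2)⁻¹ := by
  rcases min_cases a b with ⟨h, -⟩ | ⟨h, -⟩ <;> rw [h]
  · exact le_add_of_nonneg_right (by positivity)
  · exact le_add_of_nonneg_left (by positivity)

lemma sum_Ioo_inv_sq_add_inv_sq_sub_le (k : ℕ) :
    ∑ i ∈ Ioo 0 k, (((i : ℝ) ^ 2)⁻¹ + (((k : ℝ) - i) ^ 2)⁻¹) ≤ 4 := by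
  rw [sum_add_distrib, sum_Ioo_comp_sub (fun t => (t ^ 2)⁻¹)]
  have := sum_Ioo_inv_sq_le (α := ℝ) 0 k
  norm_num at this
  linarith

lemma two_mul_sin_rpow_neg_le {k t m : ℝ} (ht : 1 ≤ t) (htk : t ≤ k - 1) (hm : 2 ≤ m) :
    (2 * sin (π * t / k)) ^ (-m) ≤ k ^ m * ((t ^ 2)⁻¹ + ((k - t) ^ 2)⁻¹) := by
  have hk : 0 < k := by linarith
  set s := min t (k - t)
  have hs : 1 ≤ s := le_min ht (by linarith)
  have hsin : s / k ≤ 2 * sin (π * t / k) := by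
    have hmin : 2 / π * min (π * t / k) (π - π * t / k) = 2 * (s / k) := by
      have : min (π * t / k) (π - π * t / k) = π / k * s := by
        rw [mul_min_of_nonneg _ _ (by positivity)]
        congr 1 <;> field_simp
      rw [this]
      field_simp
    have := two_div_pi_mul_min_le_sin (x := π * t / k) (by positivity)
      (by rw [div_le_iff₀ hk]; nlinarith [pi_pos])
    rw [hmin] at this
    have : 0 ≤ s / k := by positivity
    linarith
  calc (2 * sin (π * t / k)) ^ (-m) ≤ (s / k) ^ (-m) :=
        rpow_le_rpow_of_nonpos (by positivity) hsin (by linarith)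
    _ = k ^ m * s ^ (-m) := by
        rw [div_rpow (by positivity) hk.le, rpow_neg hk.le, div_inv_eq_mul, mul_comm]
    _ ≤ k ^ m * (s ^ 2)⁻¹ := by gcongr; exact rpow_neg_le_inv_sq hs hm
    _ ≤ k ^ m * ((t ^ 2)⁻¹ + ((k - t) ^ 2)⁻¹) := by gcongr; exact inv_sq_min_le

lemma le_two_mul_sin_pi_div_rpow_neg {k m : ℝ} (hk : 1 < k) (hm : 0 ≤ m) :
    (2 * π) ^ (-m) * k ^ m ≤ (2 * sin (π / k)) ^ (-m) := by
  have hk0 : 0 < k := by linarith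
  have hsin : 0 < sin (π / k) :=
    sin_pos_of_pos_of_lt_pi (by positivity) (by rw [div_lt_iff₀ hk0]; nlinarith [pi_pos])
  calc (2 * π) ^ (-m) * k ^ m = (2 * π / k) ^ (-m) := by
        rw [div_rpow (by positivity) hk0.le, rpow_neg hk0.le, div_inv_eq_mul]
    _ ≤ (2 * sin (π / k)) ^ (-m) := by
        refine rpow_le_rpow_of_nonpos (by positivity) ?_ (by linarith)
        rw [mul_div_assoc]
        exact mul_le_mul_of_nonneg_left (sin_le (by positivity)) zero_le_two

/-- Order of magnitude `k^{n-2}` of the interaction sum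
`Σ_{j=2}^k [2(1 - cos(2π(j-1)/k))]^{-(n-2)/2}` for `n ≥ 4`. -/
theorem interaction_sum_order (n : ℕ) (hn : 4 ≤ n) :
    ∃ c C : ℝ, 0 < c ∧ 0 < C ∧ ∀ k : ℕ, 2 ≤ k →
      c * (k : ℝ) ^ ((n : ℝ) - 2) ≤
        (∑ j ∈ Finset.Icc 2 k,
          (2 * (1 - Real.cos (2 * Real.pi * ((j : ℝ) - 1) / k))) ^ (-(((n : ℝ) - 2) / 2))) ∧
      (∑ j ∈ Finset.Icc 2 k,
          (2 * (1 - Real.cos (2 * Real.pi * ((j : ℝ) - 1) / k))) ^ (-(((n : ℝ) - 2) / 2)))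
        ≤ C * (k : ℝ) ^ ((n : ℝ) - 2) := by
  set m : ℝ := (n : ℝ) - 2
  have hm : 2 ≤ m := by
    have : (4 : ℝ) ≤ n := by exact_mod_cast hn
    linarith
  refine ⟨(2 * π) ^ (-m), 4, by positivity, by norm_num, fun k hk => ?_⟩
  have hkR : (2 : ℝ) ≤ k := by exact_mod_cast hk
  have hsin_nonneg : ∀ i ∈ Ioo 0 k, 0 ≤ sin (π * i / k) := fun i hi =>
    sin_nonneg_of_nonneg_of_le_pi (by positivity) <| by
      rw [div_le_iff₀ (by positivity)]
      gcongr
      exact_mod_cast (mem_Ioo.1 hi).2.le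
  rw [sum_Icc_two_comp_sub_one (fun t => (2 * (1 - cos (2 * π * t / k))) ^ (-(m / 2))),
    sum_congr rfl fun i hi => by
      rw [mul_assoc, mul_div_assoc, two_mul_one_sub_cos_two_mul_rpow (hsin_nonneg i hi)]]
  constructor
  · calc (2 * π) ^ (-m) * k ^ m ≤ (2 * sin (π * (1 : ℕ) / k)) ^ (-m) := by
          simpa using le_two_mul_sin_pi_div_rpow_neg (by linarith) (by linarith)
      _ ≤ ∑ i ∈ Ioo 0 k, (2 * sin (π * i / k)) ^ (-m) :=
          single_le_sum (f := fun i : ℕ => (2 * sin (π * i / k)) ^ (-m))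
            (fun i hi => rpow_nonneg (by linarith [hsin_nonneg i hi]) _)
            (mem_Ioo.2 ⟨one_pos, hk⟩)
  · calc ∑ i ∈ Ioo 0 k, (2 * sin (π * i / k)) ^ (-m)
        ≤ ∑ i ∈ Ioo 0 k, k ^ m * (((i : ℝ) ^ 2)⁻¹ + (((k : ℝ) - i) ^ 2)⁻¹) :=
          sum_le_sum fun i hi => by
            obtain ⟨hi0, hik⟩ := mem_Ioo.1 hi
            exact two_mul_sin_rpow_neg_le (by exact_mod_cast hi0)
              (by rw [le_sub_iff_add_le]; exact_mod_cast hik) hm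
      _ ≤ k ^ m * 4 := by
          rw [← mul_sum]
          gcongr
          exact sum_Ioo_inv_sq_add_inv_sq_sub_le k
      _ = 4 * k ^ m := mul_comm _ _
end

section
/- Let n ≥ 5. There exist constants c, C > 0 (depending only on n) such that for all τ ∈ (0, 1/2) and all integers k with kτ ≥ 1, c·k/τ^{n-3} ≤ Σ_{j=1}^{k} [4τ² + 2(1-τ²)(1 - cos(2π(j-1)/k))]^{-(n-2)/2} ≤ C·k/τ^{n-3}. -/
/-!
With `d` the distance from `j/k` to the nearest integer, the squared distance
`D = 4τ² + 2(1 - τ²)(1 - cos 2πj/k)` is comparable to `(τ + d)²`: `1 - cos θ ≤ θ²/2` bounds it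
above by `O(τ²)` for the `≈ kτ` indices with `j ≤ kτ`, which gives the lower bound, and the
Jordan-type bound `cos x ≤ 1 - 2x²/π²` gives `D ≥ (τ + d)²`. Hence the sum is at most
`2 ∑_m (τ + m/k)^{-(n-2)}`, a Riemann sum for `k ∫_τ^∞ x^{-(n-2)} dx ≈ k τ^{-(n-3)}`, which is
bounded by telescoping `1/a² ≤ 2k (1/a - 1/(a + 1/k))` for `a ≥ τ ≥ 1/k`.
-/

open Finset Real

/-- `|ξ̄_1 - ξ̲_j|²` at angle `θ = θ_j`. -/
noncomputable def crossDistSq (τ θ : ℝ) : ℝ :=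
  4 * τ ^ 2 + 2 * (1 - τ ^ 2) * (1 - cos θ)

lemma crossDistSq_le (τ θ : ℝ) : crossDistSq τ θ ≤ 4 * τ ^ 2 + θ ^ 2 := by
  have h1 := one_sub_sq_div_two_le_cos (x := θ)
  have h2 := cos_le_one θ
  unfold crossDistSq
  nlinarith [sq_nonneg τ]

lemma crossDistSq_pos {τ : ℝ} (hτ0 : 0 < τ) (hτ1 : τ ≤ 1) (θ : ℝ) : 0 < crossDistSq τ θ := by
  have := cos_le_one θ
  unfold crossDistSq
  have : 0 ≤ 2 * (1 - τ ^ 2) * (1 - cos θ) := mul_nonneg (by nlinarith) (by linarith)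
  positivity

lemma crossDistSq_two_pi_sub (τ θ : ℝ) : crossDistSq τ (2 * π - θ) = crossDistSq τ θ := by
  rw [crossDistSq, crossDistSq, cos_two_pi_sub]

lemma sq_add_le_crossDistSq {τ x : ℝ} (hτ0 : 0 ≤ τ) (hτ : τ ≤ 1 / 2) (hx0 : 0 ≤ x)
    (hx : x ≤ 1 / 2) :
    (τ + x) ^ 2 ≤ crossDistSq τ (2 * π * x) := by
  have hcos : 8 * x ^ 2 ≤ 1 - cos (2 * π * x) := by
    have := cos_le_one_sub_mul_cos_sq (x := 2 * π * x) (by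
      rw [abs_of_nonneg (by positivity)]; nlinarith [pi_pos])
    have : 2 / π ^ 2 * (2 * π * x) ^ 2 = 8 * x ^ 2 := by field_simp; ring
    linarith
  have hτsq : 3 / 4 ≤ 1 - τ ^ 2 := by nlinarith
  have := mul_le_mul_of_nonneg_right hτsq (by nlinarith : 0 ≤ 1 - cos (2 * π * x))
  unfold crossDistSq
  nlinarith [sq_nonneg (τ - x)]

lemma sq_rpow_neg_half {x : ℝ} (hx : 0 ≤ x) (s : ℝ) : (x ^ 2) ^ (-(s / 2)) = x ^ (-s) := by
  rw [← rpow_two, ← rpow_mul hx]; ring_nf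

lemma sum_range_inv_add_div_sq_le {τ K : ℝ} (hτ : 0 < τ) (hK : 1 ≤ K * τ) (N : ℕ) :
    ∑ m ∈ range N, ((τ + m / K) ^ 2)⁻¹ ≤ 2 * K / τ := by
  have hK0 : 0 < K := pos_of_mul_pos_left (one_pos.trans_le hK) hτ.le
  suffices ∑ m ∈ range N, ((τ + m / K) ^ 2)⁻¹ ≤ 2 * K * (τ⁻¹ - (τ + N / K)⁻¹) by
    refine this.trans ?_
    rw [div_eq_mul_inv]
    exact mul_le_mul_of_nonneg_left (sub_le_self _ (by positivity)) (by positivity)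
  induction N with
  | zero => simp
  | succ N ih =>
    rw [sum_range_succ]
    set a := τ + N / K
    have ha : τ ≤ a := le_add_of_nonneg_right (by positivity)
    have ha0 : 0 < a := hτ.trans_le ha
    -- consecutive points are `1/K ≤ τ ≤ a` apart, so `a + 1/K ≤ 2a` and the step telescopes
    have hstep : (a ^ 2)⁻¹ ≤ 2 * K * (a⁻¹ - (a + 1 / K)⁻¹) := by
      have : 2 * K * (a⁻¹ - (a + 1 / K)⁻¹) = 2 * K / (a * (K * a + 1)) := by field_simp; ring
      rw [this, inv_eq_one_div, div_le_div_iff₀ (by positivity) (by positivity)]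
      nlinarith
    have : τ + ((N + 1 : ℕ) : ℝ) / K = a + 1 / K := by push_cast; ring
    rw [this]
    linarith

lemma sum_range_add_div_rpow_neg_le {τ K s : ℝ} (hτ : 0 < τ) (hK : 1 ≤ K * τ) (hs : 2 ≤ s)
    (N : ℕ) : ∑ m ∈ range N, (τ + m / K) ^ (-s) ≤ 2 * K / τ ^ (s - 1) := by
  have hK0 : 0 < K := pos_of_mul_pos_left (one_pos.trans_le hK) hτ.le
  have hsplit : ∀ x : ℝ, 0 < x → x ^ (-s) = (x ^ (s - 2))⁻¹ * (x ^ 2)⁻¹ := fun x hx => by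
    rw [← rpow_two, ← rpow_neg hx.le, ← rpow_neg hx.le, ← rpow_add hx]; ring_nf
  calc ∑ m ∈ range N, (τ + m / K) ^ (-s)
      ≤ ∑ m ∈ range N, (τ ^ (s - 2))⁻¹ * ((τ + m / K) ^ 2)⁻¹ := by
        gcongr with m
        rw [hsplit _ (by positivity)]
        gcongr
        exact le_add_of_nonneg_right (by positivity)
    _ ≤ (τ ^ (s - 2))⁻¹ * (2 * K / τ) := by
        rw [← mul_sum]
        gcongr
        exact sum_range_inv_add_div_sq_le hτ hK N
    _ = 2 * K / τ ^ (s - 1) := by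
        rw [show s - 1 = (s - 2) + 1 by ring, rpow_add_one hτ.ne']
        field_simp

lemma crossDistSq_rpow_le {τ x s : ℝ} (hτ0 : 0 < τ) (hτ : τ ≤ 1 / 2) (hx0 : 0 ≤ x)
    (hx : x ≤ 1 / 2) (hs : 0 ≤ s) : crossDistSq τ (2 * π * x) ^ (-(s / 2)) ≤ (τ + x) ^ (-s) := by
  rw [← sq_rpow_neg_half (x := τ + x) (by positivity)]
  refine rpow_le_rpow_of_nonpos ?_ (sq_add_le_crossDistSq hτ0.le hτ hx0 hx) (by linarith)
  positivity

lemma crossDistSq_rpow_le_add {τ s : ℝ} {j k : ℕ} (hτ0 : 0 < τ) (hτ : τ ≤ 1 / 2) (hs : 0 ≤ s)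
    (hjk : j < k) :
    crossDistSq τ (2 * π * j / k) ^ (-(s / 2)) ≤
      (τ + j / k) ^ (-s) + (τ + (k - j : ℕ) / k) ^ (-s) := by
  have hk : (0 : ℝ) < k := by exact_mod_cast hjk.pos
  have hjk' : (j : ℝ) ≤ k := by exact_mod_cast hjk.le
  rcases le_total (2 * j) k with h | h
  · have h' : (2 * j : ℝ) ≤ k := by exact_mod_cast h
    have := crossDistSq_rpow_le hτ0 hτ (x := j / k) (by positivity)
      (by rw [div_le_iff₀ hk]; linarith) hs
    rw [mul_div_assoc]
    exact this.trans (le_add_of_nonneg_right (by positivity))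
  · have h' : (k : ℝ) ≤ 2 * j := by exact_mod_cast h
    have := crossDistSq_rpow_le hτ0 hτ (x := (k - j : ℕ) / k) (by positivity)
      (by rw [div_le_iff₀ hk, Nat.cast_sub hjk.le]; linarith) hs
    rw [← crossDistSq_two_pi_sub, show 2 * π - 2 * π * ((k - j : ℕ) / k) = 2 * π * j / k by
      rw [Nat.cast_sub hjk.le]; field_simp; ring] at this
    exact this.trans (le_add_of_nonneg_left (by positivity))

lemma sum_range_crossDistSq_rpow_le {τ s : ℝ} {k : ℕ} (hτ0 : 0 < τ) (hτ : τ ≤ 1 / 2)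
    (hs : 2 ≤ s) (hk : 1 ≤ k * τ) :
    ∑ j ∈ range k, crossDistSq τ (2 * π * j / k) ^ (-(s / 2)) ≤ 4 * k / τ ^ (s - 1) := by
  set g : ℕ → ℝ := fun m => (τ + m / k) ^ (-s)
  have hg : ∀ m, 0 ≤ g m := fun m => by positivity
  have hreflect : ∑ j ∈ range k, g (k - j) = ∑ j ∈ range k, g (j + 1) := by
    rw [← sum_range_reflect (fun j => g (j + 1))]
    exact sum_congr rfl fun j hj => by
      rw [show k - 1 - j + 1 = k - j by have := mem_range.1 hj; omega]
  calc ∑ j ∈ range k, crossDistSq τ (2 * π * j / k) ^ (-(s / 2))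
      ≤ ∑ j ∈ range k, (g j + g (k - j)) :=
        sum_le_sum fun j hj => crossDistSq_rpow_le_add hτ0 hτ (by linarith) (mem_range.1 hj)
    _ ≤ 2 * ∑ m ∈ range (k + 1), g m := by
        rw [sum_add_distrib, hreflect, two_mul]
        refine add_le_add ?_ ?_
        · rw [sum_range_succ]; linarith [hg k]
        · rw [sum_range_succ']; linarith [hg 0]
    _ ≤ 2 * (2 * k / τ ^ (s - 1)) := by
        gcongr
        exact sum_range_add_div_rpow_neg_le hτ0 hk hs _
    _ = 4 * k / τ ^ (s - 1) := by ring

lemma le_sum_range_crossDistSq_rpow {τ s : ℝ} {k : ℕ} (hτ0 : 0 < τ) (hτ : τ < 1)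
    (hs : 0 ≤ s) (hk : 1 ≤ k * τ) :
    (4 + 4 * π ^ 2) ^ (-(s / 2)) * k / τ ^ (s - 1) ≤
      ∑ j ∈ range k, crossDistSq τ (2 * π * j / k) ^ (-(s / 2)) := by
  have hk0 : (0 : ℝ) < k := pos_of_mul_pos_left (one_pos.trans_le hk) hτ0.le
  set c : ℝ := (4 + 4 * π ^ 2) ^ (-(s / 2))
  set F := ⌊(k : ℝ) * τ⌋₊
  have hFk : F + 1 ≤ k := Nat.floor_lt (by positivity) |>.2 (by nlinarith)
  have hterm : ∀ j ∈ range (F + 1), c * τ ^ (-s) ≤ crossDistSq τ (2 * π * j / k) ^ (-(s / 2)) := by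
    intro j hj
    have hjF : (j : ℝ) ≤ k * τ :=
      Nat.le_floor_iff (by positivity) |>.1 (Nat.lt_succ_iff.1 (mem_range.1 hj))
    have hθ : 2 * π * j / k ≤ 2 * π * τ := by
      rw [div_le_iff₀ hk0]; nlinarith [pi_pos]
    have hD : crossDistSq τ (2 * π * j / k) ≤ (4 + 4 * π ^ 2) * τ ^ 2 := by
      have := crossDistSq_le τ (2 * π * j / k)
      have := pow_le_pow_left₀ (by positivity) hθ 2
      nlinarith
    rw [← sq_rpow_neg_half hτ0.le, ← mul_rpow (by positivity) (by positivity)]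
    exact rpow_le_rpow_of_nonpos (crossDistSq_pos hτ0 hτ.le _) hD (by linarith)
  calc c * k / τ ^ (s - 1) = (k * τ) * (c * τ ^ (-s)) := by
        rw [rpow_neg hτ0.le, rpow_sub_one hτ0.ne']; field_simp
    _ ≤ (F + 1 : ℕ) * (c * τ ^ (-s)) := by
        gcongr
        push_cast
        exact (Nat.lt_floor_add_one _).le
    _ ≤ ∑ j ∈ range (F + 1), crossDistSq τ (2 * π * j / k) ^ (-(s / 2)) := by
        simpa using card_nsmul_le_sum _ _ _ hterm
    _ ≤ ∑ j ∈ range k, crossDistSq τ (2 * π * j / k) ^ (-(s / 2)) :=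
        sum_le_sum_of_subset_of_nonneg (range_subset_range.2 hFk) fun _ _ _ =>
          rpow_nonneg (crossDistSq_pos hτ0 hτ.le _).le _

lemma sum_Icc_one_sub_one_eq_sum_range {M : Type*} [AddCommMonoid M] (f : ℝ → M) (k : ℕ) :
    ∑ j ∈ Icc 1 k, f ((j : ℝ) - 1) = ∑ j ∈ range k, f j := by
  rw [← Ico_add_one_right_eq_Icc, sum_Ico_eq_sum_range]
  simp [add_comm]

/-- Order of magnitude `k/τ^{n-3}` of the cross-interaction sum for `n ≥ 5`. -/
theorem cross_interaction_sum_order (n : ℕ) (hn : 5 ≤ n) :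
    ∃ c C : ℝ, 0 < c ∧ 0 < C ∧
      ∀ τ : ℝ, τ ∈ Set.Ioo (0 : ℝ) (1 / 2) → ∀ k : ℕ, 1 ≤ (k : ℝ) * τ →
        c * (k : ℝ) / τ ^ ((n : ℝ) - 3) ≤
          (∑ j ∈ Finset.Icc 1 k,
            (4 * τ ^ 2 + 2 * (1 - τ ^ 2) * (1 - Real.cos (2 * Real.pi * ((j : ℝ) - 1) / k)))
              ^ (-(((n : ℝ) - 2) / 2))) ∧
        (∑ j ∈ Finset.Icc 1 k,
            (4 * τ ^ 2 + 2 * (1 - τ ^ 2) * (1 - Real.cos (2 * Real.pi * ((j : ℝ) - 1) / k)))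
              ^ (-(((n : ℝ) - 2) / 2)))
          ≤ C * (k : ℝ) / τ ^ ((n : ℝ) - 3) := by
  refine ⟨(4 + 4 * π ^ 2) ^ (-(((n : ℝ) - 2) / 2)), 4, by positivity, by norm_num,
    fun τ ⟨hτ0, hτ⟩ k hk => ?_⟩
  have hs : (2 : ℝ) ≤ n - 2 := by
    have : (5 : ℝ) ≤ n := by exact_mod_cast hn
    linarith
  have hsum := sum_Icc_one_sub_one_eq_sum_range
    (fun x => crossDistSq τ (2 * π * x / k) ^ (-(((n : ℝ) - 2) / 2))) k
  have hlower :=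
    le_sum_range_crossDistSq_rpow hτ0 (by linarith) (by linarith : 0 ≤ (n : ℝ) - 2) hk
  have hupper := sum_range_crossDistSq_rpow_le hτ0 hτ.le hs hk
  rw [← hsum] at hlower hupper
  rw [show (n : ℝ) - 3 = n - 2 - 1 by ring]
  exact ⟨hlower, hupper⟩
end
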